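/- arXiv:1112.0765 — 2 statements merged into one kernel-verified Lean document; each statement's English description precedes it below -/
import Mathlib

section
/- Let G be a simple graph with Laplacian L_G, and for each vertex i let L_{i,r} be the principal submatrix of L_G indexed by the set N_{i,r} of vertices at graph distance at most r from i, with the row/column of i placed first. Then for every k ≤ 2r+1, the k-th Laplacian spectral moment satisfies m_k(L_G) = (1/n)·∑_{i=1}^n [L_{i,r}^k]_{1,1}. -/
/-!
For a matrix `M` whose nonzero entries join vertices at graph distance at most one (such as the
Laplacian), `(M ^ m) a b` is a sum over walks `a = c₀, c₁, …, cₘ = b` of length `m` whose steps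
stay put or follow an edge, and every vertex `c` on such a walk has
`edist a c + edist c b ≤ m`. Restricting `M` to a vertex set containing all such `c` therefore
loses no walk. For `a = b = i` and `m = k ≤ 2r + 1` this condition reads `2 · edist i c ≤ 2r + 1`,
so the radius-`r` ball around `i` suffices.
-/

open Classical

open Matrix

namespace Matrix

variable {V R : Type*} [Fintype V] [DecidableEq V] [Semiring R]

def IsGraphLocal (G : SimpleGraph V) (M : Matrix V V R) : Prop :=
  ∀ a b, M a b ≠ 0 → G.edist a b ≤ 1

namespace IsGraphLocal

variable {G : SimpleGraph V} {M : Matrix V V R}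

theorem edist_le_of_pow_apply_ne_zero (hM : M.IsGraphLocal G) {m : ℕ} {a b : V}
    (h : (M ^ m) a b ≠ 0) : G.edist a b ≤ m := by
  induction m generalizing a with
  | zero =>
    obtain rfl : a = b := by
      by_contra hab
      simp [hab] at h
    simp
  | succ m ih =>
    rw [pow_succ', mul_apply] at h
    obtain ⟨c, -, hc⟩ := Finset.exists_ne_zero_of_sum_ne_zero h
    calc G.edist a b ≤ G.edist a c + G.edist c b := G.edist_triangle
      _ ≤ 1 + m := add_le_add (hM a c (left_ne_zero_of_mul hc)) (ih (right_ne_zero_of_mul hc))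
      _ = (m + 1 : ℕ) := by push_cast; ring

theorem submatrix_pow_apply (hM : M.IsGraphLocal G) {p : V → Prop} [Fintype (Subtype p)]
    (m : ℕ) (a b : Subtype p) (hp : ∀ c, G.edist a c + G.edist c b ≤ m → p c) :
    (M.submatrix (↑) (↑) ^ m) a b = (M ^ m) a b := by
  induction m generalizing a with
  | zero => simp only [pow_zero, one_apply, Subtype.ext_iff]
  | succ m ih =>
    have hterm (c : Subtype p) :
        M a c * (M.submatrix (↑) (↑) ^ m) c b = M a c * (M ^ m) c b := by
      by_cases hac : M a c = 0
      · simp [hac]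
      refine congrArg _ (ih c fun d hd => hp d ?_)
      calc G.edist a d + G.edist d b ≤ G.edist a c + G.edist c d + G.edist d b := by
            gcongr; exact G.edist_triangle
        _ ≤ 1 + m := by rw [add_assoc]; exact add_le_add (hM _ _ hac) hd
        _ = (m + 1 : ℕ) := by push_cast; ring
    have houtside (c : V) (hc : M a c * (M ^ m) c b ≠ 0) : p c := hp c <|
      calc G.edist a c + G.edist c b ≤ 1 + m :=
            add_le_add (hM _ _ (left_ne_zero_of_mul hc))
              (hM.edist_le_of_pow_apply_ne_zero (right_ne_zero_of_mul hc))
        _ = (m + 1 : ℕ) := by push_cast; ring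
    rw [pow_succ', pow_succ', mul_apply, mul_apply]
    simp only [submatrix_apply, hterm]
    rw [← Finset.sum_subtype (Finset.univ.filter p) (by simp) (fun c => M a c * (M ^ m) c b),
      Finset.sum_filter_of_ne fun c _ => houtside c]

end IsGraphLocal

end Matrix

namespace SimpleGraph

theorem reachable_and_dist_le_iff_edist_le {V : Type*} (G : SimpleGraph V) {u v : V} {r : ℕ} :
    G.Reachable u v ∧ G.dist u v ≤ r ↔ G.edist u v ≤ r := by
  refine ⟨fun ⟨huv, h⟩ => huv.coe_dist_eq_edist ▸ by exact_mod_cast h, fun h => ?_⟩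
  have huv : G.Reachable u v := reachable_of_edist_ne_top (ne_top_of_le_ne_top (by simp) h)
  exact ⟨huv, by rw [← huv.coe_dist_eq_edist] at h; exact_mod_cast h⟩

variable {V : Type*} [Fintype V] [DecidableEq V] (G : SimpleGraph V) [DecidableRel G.Adj]

theorem isGraphLocal_lapMatrix (R : Type*) [Ring R] : (G.lapMatrix R).IsGraphLocal G := by
  intro a b hab
  rw [edist_le_one_iff_adj_or_eq]
  by_contra! h
  simp [lapMatrix, degMatrix, Matrix.sub_apply, h.1, diagonal_apply_ne _ h.2] at hab

end SimpleGraph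

/-- The `k`-th Laplacian spectral moment of a simple graph `G` on `n` vertices can be computed
from the local Laplacian submatrices: for `k ≤ 2r + 1`,
`m_k(L_G) = (1/n) ∑ᵢ [L_{i,r}^k]_{11}`, where `L_{i,r}` is the principal submatrix of the
Laplacian indexed by the radius-`r` neighborhood `N_{i,r}` of `i`, with the entry of `i`
selected on the diagonal. -/
theorem moments_from_local_submatrices {n : ℕ} (G : SimpleGraph (Fin n)) [DecidableRel G.Adj]
    (r k : ℕ) (hk : k ≤ 2 * r + 1) :
    (1 / n : ℝ) * Matrix.trace (G.lapMatrix ℝ ^ k) =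
      (1 / n : ℝ) * ∑ i : Fin n,
        (((G.lapMatrix ℝ).submatrix
            (fun a : {j : Fin n // G.Reachable i j ∧ G.dist i j ≤ r} => (a : Fin n))
            (fun a : {j : Fin n // G.Reachable i j ∧ G.dist i j ≤ r} => (a : Fin n)) ^ k)
          ⟨i, SimpleGraph.Reachable.refl i, by rw [SimpleGraph.dist_self]; exact Nat.zero_le r⟩
          ⟨i, SimpleGraph.Reachable.refl i, by rw [SimpleGraph.dist_self]; exact Nat.zero_le r⟩) := by
  congr 1
  refine Finset.sum_congr rfl fun i _ => Eq.symm ?_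
  refine (G.isGraphLocal_lapMatrix ℝ).submatrix_pow_apply k _ _ fun c hc =>
    (G.reachable_and_dist_le_iff_edist_le).2 ?_
  rw [SimpleGraph.edist_comm (u := c)] at hc
  obtain ⟨d, hd⟩ : ∃ d : ℕ, (d : ℕ∞) = G.edist i c :=
    ENat.ne_top_iff_exists.1 (ne_top_of_le_ne_top (ENat.natCast_ne_top k) (le_self_add.trans hc))
  rw [← hd] at hc ⊢
  norm_cast at hc ⊢
  omega
end

section
/- Let G be a simple graph and (i,j) a non-edge (respectively edge) of G, and let U and U^± be the principal submatrices of L_G and of L_{G±(i,j)} indexed by N_{i,r} ∪ N_{j,r}. Then for every k ≤ 2r+1, the change in the k-th Laplacian spectral moment satisfies m_k(L_{G±(i,j)}) − m_k(L_G) = (1/n)·(Trace((U^±)^k) − Trace(U^k)). -/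
/-! The Laplacians `L = L_G` and `L' = L_{G'}` differ only in entries indexed by `{i, j}`, and
telescoping gives `tr L'^k - tr L^k = ∑_{t<k} tr ((L' - L) L^(k-1-t) L'^t)`, together with the same
identity for the principal submatrices on `S = N_{i,r} ∪ N_{j,r}`. So it suffices that the entries
of `L^c L'^t` with both indices in `{i, j}` do not change when everything is restricted to `S`,
for `c + t ≤ 2r`. Expanding the product, each nonzero term is a walk of length `c + t` between two
vertices of `{i, j}` whose steps either stay put, follow an edge of `G` or jump inside `{i, j}`;
its `p`-th vertex is within distance `min p (c + t - p) ≤ r` of `{i, j}`, hence lies in `S`. -/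

open Classical

open Matrix

/-- The radius-`r` neighborhood of a vertex `i` in a graph `G`: vertices reachable from `i`
at graph distance at most `r`. -/
def nbhd {n : ℕ} (G : SimpleGraph (Fin n)) (i : Fin n) (r : ℕ) : Set (Fin n) :=
  {v | G.Reachable i v ∧ G.dist i v ≤ r}

theorem pow_sub_pow_eq_sum_range {R : Type*} [Ring R] (x y : R) (k : ℕ) :
    x ^ k - y ^ k = ∑ t ∈ Finset.range k, x ^ t * (x - y) * y ^ (k - 1 - t) := by
  have h := Finset.sum_range_sub (fun t => x ^ t * y ^ (k - t)) k
  simp only [Nat.sub_self, pow_zero, mul_one, Nat.sub_zero, one_mul] at h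
  rw [← h]
  refine Finset.sum_congr rfl fun t ht => ?_
  obtain ⟨s, rfl⟩ := Nat.exists_eq_add_of_lt (Finset.mem_range.1 ht)
  rw [show t + s + 1 - (t + 1) = s by omega, show t + s + 1 - t = s + 1 by omega,
    show t + s + 1 - 1 - t = s by omega, pow_succ, pow_succ', mul_sub, sub_mul, mul_assoc,
    mul_assoc]

theorem Set.sum_subtype_eq_sum {ι M : Type*} [Fintype ι] [AddCommMonoid M] (S : Set ι)
    [Fintype S] {f : ι → M} (h : ∀ x, f x ≠ 0 → x ∈ S) : ∑ x : S, f x = ∑ x, f x := by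
  rw [Finset.sum_set_coe]
  exact Fintype.sum_subset fun x hx => Set.mem_toFinset.2 (h x hx)

namespace Matrix

variable {ι R : Type*} [Fintype ι]

theorem trace_pow_sub_trace_pow [DecidableEq ι] [CommRing R] (A B : Matrix ι ι R) (k : ℕ) :
    trace (A ^ k) - trace (B ^ k) =
      ∑ t ∈ Finset.range k, trace ((A - B) * (B ^ (k - 1 - t) * A ^ t)) := by
  rw [← trace_sub, pow_sub_pow_eq_sum_range, trace_sum]
  refine Finset.sum_congr rfl fun t _ => ?_
  rw [mul_assoc, trace_mul_comm, mul_assoc]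

theorem trace_submatrix_mul_eq [Semiring R] {S : Set ι} [Fintype S] (D X : Matrix ι ι R)
    (Z : Matrix S S R) (hD : ∀ a b, D a b ≠ 0 → a ∈ S ∧ b ∈ S)
    (hZ : ∀ a b : S, D a b ≠ 0 → Z b a = X b a) :
    trace (D.submatrix Subtype.val Subtype.val * Z) = trace (D * X) := by
  simp only [trace, diag, mul_apply, submatrix_apply]
  calc ∑ a : S, ∑ b : S, D a b * Z b a = ∑ a : S, ∑ b : S, D a b * X b a := by
        refine Finset.sum_congr rfl fun a _ => Finset.sum_congr rfl fun b _ => ?_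
        by_cases hab : D a b = 0
        · rw [hab, zero_mul, zero_mul]
        · rw [hZ a b hab]
    _ = ∑ a : S, ∑ b, D a b * X b a :=
        Finset.sum_congr rfl fun a _ => S.sum_subtype_eq_sum (f := fun b => D a b * X b a)
          fun b hb => (hD a b (left_ne_zero_of_mul hb)).2
    _ = ∑ a, ∑ b, D a b * X b a :=
        S.sum_subtype_eq_sum (f := fun a => ∑ b, D a b * X b a) fun a ha => by
          obtain ⟨b, -, hb⟩ := Finset.exists_ne_zero_of_sum_ne_zero ha
          exact (hD a b (left_ne_zero_of_mul hb)).1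

end Matrix

section Locality

variable {ι R : Type*} (W : ℕ → Set ι)

def IsBanded [Zero R] (M : Matrix ι ι R) : Prop :=
  ∀ w z, M w z ≠ 0 → ∀ m, (w ∈ W m → z ∈ W (m + 1)) ∧ (z ∈ W m → w ∈ W (m + 1))

variable {W}

theorem IsBanded.add [AddZeroClass R] {M N : Matrix ι ι R} (hM : IsBanded W M)
    (hN : IsBanded W N) : IsBanded W (M + N) := fun w z h m => by
  by_cases hMwz : M w z = 0
  · rw [Matrix.add_apply, hMwz, zero_add] at h
    exact hN w z h m
  · exact hM w z hMwz m

theorem isBanded_of_support_subset [Zero R] (hW : Monotone W) {D : Matrix ι ι R}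
    (hD : ∀ a b, D a b ≠ 0 → a ∈ W 0 ∧ b ∈ W 0) : IsBanded W D := fun a b h _ =>
  ⟨fun _ => hW (Nat.zero_le _) (hD a b h).2, fun _ => hW (Nat.zero_le _) (hD a b h).1⟩

variable [Semiring R] {r : ℕ}

variable (W r) in
def AgreesOnColumn (u : W r) (t : ℕ) (X : Matrix ι ι R) (Y : Matrix (W r) (W r) R) : Prop :=
  (∀ w, X w u ≠ 0 → w ∈ W t) ∧
    ∀ (w : W r) (m : ℕ), (w : ι) ∈ W m → t + m ≤ 2 * r → Y w u = X w u

theorem agreesOnColumn_one [DecidableEq ι] {u : W r} (hu : (u : ι) ∈ W 0) :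
    AgreesOnColumn W r u 0 (1 : Matrix ι ι R) 1 := by
  refine ⟨fun w hw => ?_, fun w m _ _ => ?_⟩
  · by_contra hwW
    exact hw (one_apply_ne fun hwu => hwW (hwu ▸ hu))
  · simp only [one_apply, Subtype.ext_iff]

theorem AgreesOnColumn.mul [Fintype ι] [Fintype (W r)] (hW : Monotone W) {M X : Matrix ι ι R}
    {Y : Matrix (W r) (W r) R} {u : W r} {t : ℕ} (hM : IsBanded W M)
    (h : AgreesOnColumn W r u t X Y) :
    AgreesOnColumn W r u (t + 1) (M * X) (M.submatrix Subtype.val Subtype.val * Y) := by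
  obtain ⟨hsupp, hagree⟩ := h
  refine ⟨fun w hw => ?_, fun w m hwm htm => ?_⟩
  · obtain ⟨z, -, hz⟩ := Finset.exists_ne_zero_of_sum_ne_zero hw
    exact (hM w z (left_ne_zero_of_mul hz) t).2 (hsupp z (right_ne_zero_of_mul hz))
  rw [mul_apply]
  calc _ = ∑ z : W r, M w z * X z u := by
        refine Finset.sum_congr rfl fun z _ => ?_
        by_cases hwz : M w z = 0
        · simp only [submatrix_apply, hwz, zero_mul]
        · rw [submatrix_apply, hagree z (m + 1) ((hM w z hwz m).1 hwm) (by omega)]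
    _ = (M * X) w u :=
        (W r).sum_subtype_eq_sum (f := fun z => M w z * X z u) fun z hz => by
          have hzm := (hM w z (left_ne_zero_of_mul hz) m).1 hwm
          have hzt := hsupp z (right_ne_zero_of_mul hz)
          -- `t + m + 1 ≤ 2 r` forces `m + 1 ≤ r` or `t ≤ r`
          rcases le_total (m + 1) r with hmr | hrm
          · exact hW hmr hzm
          · exact hW (by omega) hzt

theorem AgreesOnColumn.pow_mul [Fintype ι] [DecidableEq ι] [Fintype (W r)] (hW : Monotone W)
    {M X : Matrix ι ι R} {Y : Matrix (W r) (W r) R} {u : W r} {t : ℕ} (hM : IsBanded W M)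
    (h : AgreesOnColumn W r u t X Y) (c : ℕ) :
    AgreesOnColumn W r u (c + t) (M ^ c * X) (M.submatrix Subtype.val Subtype.val ^ c * Y) := by
  induction c with
  | zero => simpa using h
  | succ c ih =>
    rw [pow_succ', pow_succ', mul_assoc, mul_assoc, Nat.add_right_comm]
    exact ih.mul hW hM

theorem submatrix_pow_mul_pow_apply [Fintype ι] [DecidableEq ι] [Fintype (W r)]
    (hW : Monotone W) {A B : Matrix ι ι R} (hA : IsBanded W A) (hB : IsBanded W B)
    {u v : W r} (hu : (u : ι) ∈ W 0) (hv : (v : ι) ∈ W 0) {c t : ℕ} (hct : c + t ≤ 2 * r) :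
    (B.submatrix Subtype.val Subtype.val ^ c * A.submatrix Subtype.val Subtype.val ^ t :
      Matrix (W r) (W r) R) v u = (B ^ c * A ^ t) v u := by
  have h := ((agreesOnColumn_one hu).pow_mul hW hA t).pow_mul hW hB c
  simp only [mul_one, add_zero] at h
  exact h.2 v 0 hv (by omega)

end Locality

namespace SimpleGraph

variable {V R : Type*} [Fintype V] [DecidableEq V] [Ring R]

theorem eq_or_adj_of_lapMatrix_apply_ne_zero (G : SimpleGraph V) [DecidableRel G.Adj]
    {u v : V} (h : G.lapMatrix R u v ≠ 0) : u = v ∨ G.Adj u v := by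
  by_contra! huv
  exact h (by simp [lapMatrix, degMatrix, diagonal_apply_ne _ huv.1, huv.2])

theorem isBanded_lapMatrix (G : SimpleGraph V) [DecidableRel G.Adj] {W : ℕ → Set V}
    (hW : Monotone W) (hadj : ∀ m w z, G.Adj w z → w ∈ W m → z ∈ W (m + 1)) :
    IsBanded W (G.lapMatrix R) := fun w z h m => by
  rcases G.eq_or_adj_of_lapMatrix_apply_ne_zero h with rfl | hwz
  · exact ⟨fun hw => hW m.le_succ hw, fun hw => hW m.le_succ hw⟩
  · exact ⟨hadj m w z hwz, hadj m z w hwz.symm⟩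

theorem lapMatrix_apply_eq_of_adj_iff (G G' : SimpleGraph V) [DecidableRel G.Adj]
    [DecidableRel G'.Adj] {u : V} (h : ∀ w, G'.Adj u w ↔ G.Adj u w) (v : V) :
    G'.lapMatrix R u v = G.lapMatrix R u v := by
  have hdeg : G'.degree u = G.degree u := by
    simp only [← card_neighborFinset_eq_degree]
    congr 1
    ext w
    simp only [mem_neighborFinset, h]
  simp [lapMatrix, degMatrix, diagonal_apply, hdeg, h v]

theorem lapMatrix_sub_apply_ne_zero (G G' : SimpleGraph V) [DecidableRel G.Adj]
    [DecidableRel G'.Adj] {i j : V}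
    (hdiff : ∀ u v, ¬(u = i ∧ v = j) → ¬(u = j ∧ v = i) → (G'.Adj u v ↔ G.Adj u v))
    {u v : V} (h : (G'.lapMatrix R - G.lapMatrix R) u v ≠ 0) :
    (u = i ∨ u = j) ∧ (v = i ∨ v = j) := by
  have hrow : ∀ {a}, ¬(a = i ∨ a = j) → ∀ b, G'.lapMatrix R a b = G.lapMatrix R a b :=
    fun ha => lapMatrix_apply_eq_of_adj_iff G G' fun w =>
      hdiff _ w (fun h => ha (.inl h.1)) (fun h => ha (.inr h.1))
  rw [Matrix.sub_apply, sub_ne_zero] at h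
  refine ⟨by_contra fun hu => h (hrow hu v), by_contra fun hv => h ?_⟩
  rw [← (G'.isSymm_lapMatrix R).apply, ← (G.isSymm_lapMatrix R).apply]
  exact hrow hv u

end SimpleGraph

theorem nbhd_mono {n : ℕ} (G : SimpleGraph (Fin n)) (x : Fin n) : Monotone (nbhd G x) :=
  fun _ _ h _ hv => ⟨hv.1, hv.2.trans h⟩

theorem self_mem_nbhd {n : ℕ} (G : SimpleGraph (Fin n)) (x : Fin n) : x ∈ nbhd G x 0 :=
  ⟨.refl x, by simp⟩

theorem mem_nbhd_succ_of_adj {n : ℕ} {G : SimpleGraph (Fin n)} {x z w : Fin n} {m : ℕ}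
    (hz : z ∈ nbhd G x m) (h : G.Adj z w) : w ∈ nbhd G x (m + 1) := by
  obtain ⟨p, hp⟩ := hz.1.exists_walk_length_eq_dist
  refine ⟨⟨p.concat h⟩, (G.dist_le (p.concat h)).trans ?_⟩
  rw [SimpleGraph.Walk.length_concat, hp]
  exact Nat.succ_le_succ hz.2

theorem moment_perturbation_edge_general {n : ℕ} (G G' : SimpleGraph (Fin n))
    [DecidableRel G.Adj] [DecidableRel G'.Adj] (i j : Fin n)
    (hdiff : ∀ u v : Fin n, ¬(u = i ∧ v = j) → ¬(u = j ∧ v = i) → (G'.Adj u v ↔ G.Adj u v))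
    (r k : ℕ) (hk : k ≤ 2 * r + 1) :
    (1 / n : ℝ) * Matrix.trace (G'.lapMatrix ℝ ^ k)
      - (1 / n : ℝ) * Matrix.trace (G.lapMatrix ℝ ^ k) =
      (1 / n : ℝ) *
        (Matrix.trace ((G'.lapMatrix ℝ).submatrix
            (fun a : ↥(nbhd G i r ∪ nbhd G j r) => (a : Fin n))
            (fun a : ↥(nbhd G i r ∪ nbhd G j r) => (a : Fin n)) ^ k)
          - Matrix.trace ((G.lapMatrix ℝ).submatrix
            (fun a : ↥(nbhd G i r ∪ nbhd G j r) => (a : Fin n))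
            (fun a : ↥(nbhd G i r ∪ nbhd G j r) => (a : Fin n)) ^ k)) := by
  let W : ℕ → Set (Fin n) := fun m => nbhd G i m ∪ nbhd G j m
  have hW : Monotone W := fun _ _ h =>
    Set.union_subset_union (nbhd_mono G i h) (nbhd_mono G j h)
  have hW0 : ∀ a, a = i ∨ a = j → a ∈ W 0 := by
    rintro a (rfl | rfl)
    exacts [.inl (self_mem_nbhd G a), .inr (self_mem_nbhd G a)]
  have hD : ∀ a b, (G'.lapMatrix ℝ - G.lapMatrix ℝ) a b ≠ 0 → a ∈ W 0 ∧ b ∈ W 0 :=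
    fun a b h => (G.lapMatrix_sub_apply_ne_zero G' hdiff h).imp (hW0 a) (hW0 b)
  have hL : IsBanded W (G.lapMatrix ℝ) := G.isBanded_lapMatrix hW fun _ _ _ h =>
    Or.imp (mem_nbhd_succ_of_adj · h) (mem_nbhd_succ_of_adj · h)
  have hL' : IsBanded W (G'.lapMatrix ℝ) := by
    simpa using hL.add (isBanded_of_support_subset hW hD)
  rw [← mul_sub, trace_pow_sub_trace_pow, trace_pow_sub_trace_pow]
  congr 1
  refine Finset.sum_congr rfl fun t ht =>
    (trace_submatrix_mul_eq (G'.lapMatrix ℝ - G.lapMatrix ℝ) _ _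
      (fun a b h => (hD a b h).imp (hW r.zero_le ·) (hW r.zero_le ·)) fun a b h => ?_).symm
  have htk := Finset.mem_range.1 ht
  exact submatrix_pow_mul_pow_apply hW hL' hL (hD a b h).1 (hD a b h).2 (by omega)

/-- Let `G'` be obtained from a simple graph `G` by adding or deleting the single edge `(i,j)`.
Then for `k ≤ 2r + 1`, the change in the `k`-th Laplacian spectral moment equals
`(1/n)(Trace((U')^k) - Trace(U^k))`, where `U` and `U'` are the principal submatrices of the
Laplacians of `G` and `G'` indexed by `N_{i,r} ∪ N_{j,r}`. -/
theorem moment_perturbation_edge {n : ℕ} (G G' : SimpleGraph (Fin n))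
    [DecidableRel G.Adj] [DecidableRel G'.Adj] (i j : Fin n) (hij : i ≠ j)
    (hdiff : ∀ u v : Fin n, ¬(u = i ∧ v = j) → ¬(u = j ∧ v = i) → (G'.Adj u v ↔ G.Adj u v))
    (r k : ℕ) (hk : k ≤ 2 * r + 1) :
    (1 / n : ℝ) * Matrix.trace (G'.lapMatrix ℝ ^ k)
      - (1 / n : ℝ) * Matrix.trace (G.lapMatrix ℝ ^ k) =
      (1 / n : ℝ) *
        (Matrix.trace ((G'.lapMatrix ℝ).submatrix
            (fun a : ↥(nbhd G i r ∪ nbhd G j r) => (a : Fin n))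
            (fun a : ↥(nbhd G i r ∪ nbhd G j r) => (a : Fin n)) ^ k)
          - Matrix.trace ((G.lapMatrix ℝ).submatrix
            (fun a : ↥(nbhd G i r ∪ nbhd G j r) => (a : Fin n))
            (fun a : ↥(nbhd G i r ∪ nbhd G j r) => (a : Fin n)) ^ k)) :=
  moment_perturbation_edge_general G G' i j hdiff r k hk
end
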